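/- Let S be a nonempty closed subset of a real Hilbert space H which is r-prox-regular for some r ∈ (0,∞]. Then for any x ∈ S and any proximal subgradient ς ∈ ∂^P d_S(x), one has ⟨ς, y − x⟩ ≤ (2/r)·‖y − x‖² + d_S(y) for every y ∈ H with d_S(y) < r. -/

import Mathlib

open MeasureTheory Set
open scoped RealInnerProductSpace ENNReal Pointwise NNReal

noncomputable section

variable {H : Type*} [NormedAddCommGroup H] [InnerProductSpace ℝ H]

/-- The proximal normal cone of `S` at `x`. -/
def proxNormalCone (S : Set H) (x : H) : Set H :=
  {v | ∃ σ : ℝ, 0 ≤ σ ∧ ∃ δ : ℝ, 0 < δ ∧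
    ∀ y ∈ S ∩ Metric.ball x δ, ⟪v, y - x⟫ ≤ σ * ‖y - x‖ ^ 2}

/-- Uniform `r`-prox-regularity, `r ∈ (0, ∞]`. -/
def IsProxRegular (r : ℝ≥0∞) (S : Set H) : Prop :=
  ∀ x ∈ S, ∀ v ∈ proxNormalCone S x, v ≠ 0 →
    ∀ y ∈ S, ⟪‖v‖⁻¹ • v, y - x⟫ ≤ ((2 * r)⁻¹).toReal * ‖y - x‖ ^ 2

variable [CompleteSpace H]

/-! A proximal subgradient `ς` of the `1`-Lipschitz function `d_S` has `‖ς‖ ≤ 1`, and at a point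
`x ∈ S` it is a proximal normal to `S`, so prox-regularity gives `⟪ς, z - x⟫ ≤ ‖z - x‖² / (2r)` on
`S`. Splitting `y - x = (y - z) + (z - x)` with `z ∈ S` almost nearest to `y`, where
`‖z - x‖ ≤ d_S(y) + ‖y - x‖ ≤ 2‖y - x‖`, yields the estimate. -/

open Filter Metric Topology

section

variable {E : Type*} [NormedAddCommGroup E] [InnerProductSpace ℝ E]

def proxSubdiff (f : E → ℝ) (x : E) : Set E :=
  {v | ∃ σ : ℝ, 0 ≤ σ ∧ ∃ δ : ℝ, 0 < δ ∧
    ∀ y ∈ ball x δ, ⟪v, y - x⟫ ≤ f y - f x + σ * ‖y - x‖ ^ 2}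

/-- Testing along `y = x + t • (v / ‖v‖)` gives `‖v‖ ≤ K + σ t` for all small `t > 0`. -/
theorem norm_le_of_mem_proxSubdiff {f : E → ℝ} {K : ℝ≥0} (hf : LipschitzWith K f) {x v : E}
    (hv : v ∈ proxSubdiff f x) : ‖v‖ ≤ K := by
  obtain ⟨σ, -, δ, hδ, hsub⟩ := hv
  rcases eq_or_ne v 0 with rfl | hv0
  · simp
  set u := ‖v‖⁻¹ • v
  have hu : ‖u‖ = 1 := norm_smul_inv_norm hv0
  have hstep : ∀ t ∈ Ioo 0 δ, ‖v‖ ≤ K + σ * t := by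
    rintro t ⟨ht0, htδ⟩
    have hdist : ‖x + t • u - x‖ = t := by simp [norm_smul, hu, ht0.le]
    have hball : x + t • u ∈ ball x δ := by rwa [mem_ball, dist_eq_norm, hdist]
    have hinner : ⟪v, x + t • u - x⟫ = t * ‖v‖ := by
      rw [add_sub_cancel_left, real_inner_smul_right, real_inner_smul_right,
        real_inner_self_eq_norm_sq]
      field_simp
    have hlip : f (x + t • u) - f x ≤ K * t := by
      calc f (x + t • u) - f x ≤ dist (f (x + t • u)) (f x) := le_abs_self _
        _ ≤ K * dist (x + t • u) x := hf.dist_le_mul _ _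
        _ = K * t := by rw [dist_eq_norm, hdist]
    have key := hsub _ hball
    rw [hinner, hdist] at key
    exact le_of_mul_le_mul_left (by nlinarith) ht0
  have htend : Tendsto (fun t : ℝ => (K : ℝ) + σ * t) (𝓝[>] 0) (𝓝 K) :=
    (Continuous.tendsto' (by fun_prop) 0 _ (by simp)).mono_left nhdsWithin_le_nhds
  exact ge_of_tendsto htend (eventually_of_mem (Ioo_mem_nhdsGT hδ) hstep)

theorem mem_proxNormalCone_of_mem_proxSubdiff_infDist {S : Set E} {x v : E} (hx : x ∈ S)
    (hv : v ∈ proxSubdiff (infDist · S) x) : v ∈ proxNormalCone S x := by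
  obtain ⟨σ, hσ, δ, hδ, hsub⟩ := hv
  refine ⟨σ, hσ, δ, hδ, fun z ⟨hzS, hzδ⟩ => ?_⟩
  simpa [infDist_zero_of_mem hzS, infDist_zero_of_mem hx] using hsub z hzδ

theorem IsProxRegular.inner_le_norm_mul {r : ℝ≥0∞} {S : Set E} (hreg : IsProxRegular r S) {x v z : E}
    (hx : x ∈ S) (hv : v ∈ proxNormalCone S x) (hz : z ∈ S) :
    ⟪v, z - x⟫ ≤ ‖v‖ * (((2 * r)⁻¹).toReal * ‖z - x‖ ^ 2) := by
  rcases eq_or_ne v 0 with rfl | hv0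
  · simp
  have hunit := hreg x hx v hv hv0 z hz
  rw [real_inner_smul_left] at hunit
  calc ⟪v, z - x⟫ = ‖v‖ * (‖v‖⁻¹ * ⟪v, z - x⟫) := by field_simp
    _ ≤ _ := mul_le_mul_of_nonneg_left hunit (norm_nonneg v)

theorem IsProxRegular.inner_le_dist_add_of_mem_proxSubdiff_infDist {r : ℝ≥0∞} {S : Set E}
    (hreg : IsProxRegular r S) {x ς : E} (hx : x ∈ S) (hς : ς ∈ proxSubdiff (infDist · S) x)
    (y : E) {z : E} (hz : z ∈ S) :
    ⟪ς, y - x⟫ ≤ dist y z + ((2 * r)⁻¹).toReal * (dist y z + ‖y - x‖) ^ 2 := by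
  have hς1 : ‖ς‖ ≤ 1 := by simpa using norm_le_of_mem_proxSubdiff (lipschitz_infDist_pt S) hς
  have hzx : ‖z - x‖ ≤ ‖y - z‖ + ‖y - x‖ := by
    simpa [norm_sub_rev z y] using norm_sub_le_norm_sub_add_norm_sub z y x
  calc ⟪ς, y - x⟫ = ⟪ς, y - z⟫ + ⟪ς, z - x⟫ := by rw [← inner_add_right, sub_add_sub_cancel]
    _ ≤ ‖ς‖ * ‖y - z‖ + ‖ς‖ * (((2 * r)⁻¹).toReal * ‖z - x‖ ^ 2) :=
      add_le_add (real_inner_le_norm _ _)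
        (hreg.inner_le_norm_mul hx (mem_proxNormalCone_of_mem_proxSubdiff_infDist hx hς) hz)
    _ ≤ ‖y - z‖ + ((2 * r)⁻¹).toReal * ‖z - x‖ ^ 2 :=
      add_le_add (mul_le_of_le_one_left (by positivity) hς1)
        (mul_le_of_le_one_left (by positivity) hς1)
    _ ≤ dist y z + ((2 * r)⁻¹).toReal * (dist y z + ‖y - x‖) ^ 2 := by
      rw [dist_eq_norm]; gcongr

theorem le_apply_infDist {α : Type*} [PseudoMetricSpace α] {S : Set α} (hS : S.Nonempty)
    {y : α} {g : ℝ → ℝ} (hg : MonotoneOn g (Ici 0))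
    (hgc : ContinuousWithinAt g (Ioi (infDist y S)) (infDist y S)) {a : ℝ}
    (h : ∀ z ∈ S, a ≤ g (dist y z)) : a ≤ g (infDist y S) := by
  refine ge_of_tendsto hgc (eventually_nhdsWithin_of_forall fun s hs => ?_)
  obtain ⟨z, hz, hzs⟩ := (infDist_lt_iff hS).mp hs
  exact (h z hz).trans (hg dist_nonneg (dist_nonneg.trans hzs.le) hzs.le)

end

theorem proxRegular_distance_subgradient_estimate_general
    (S : Set H) (hS : S.Nonempty)
    (r : ℝ≥0∞) (hreg : IsProxRegular r S)
    (x : H) (hx : x ∈ S) (ς : H)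
    (hς : ∃ σ : ℝ, 0 ≤ σ ∧ ∃ δ : ℝ, 0 < δ ∧ ∀ y ∈ Metric.ball x δ,
      ⟪ς, y - x⟫ ≤ Metric.infDist y S - Metric.infDist x S + σ * ‖y - x‖ ^ 2) :
    ∀ y : H, ENNReal.ofReal (Metric.infDist y S) < r →
      ⟪ς, y - x⟫ ≤ 2 * (r⁻¹).toReal * ‖y - x‖ ^ 2 + Metric.infDist y S := by
  intro y _
  set c := ((2 * r)⁻¹).toReal
  set R := ‖y - x‖
  have hmono : MonotoneOn (fun s => s + c * (s + R) ^ 2) (Ici 0) := fun s hs t _ hst => by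
    simp only
    gcongr
    exact add_nonneg hs (norm_nonneg _)
  have hdR : infDist y S ≤ R := by simpa [R, dist_eq_norm] using infDist_le_dist_of_mem hx (x := y)
  have hcoef : 4 * c = 2 * (r⁻¹).toReal := by
    simp only [c, ENNReal.toReal_inv, ENNReal.toReal_mul, mul_inv, ENNReal.toReal_ofNat]
    ring
  calc ⟪ς, y - x⟫ ≤ infDist y S + c * (infDist y S + R) ^ 2 :=
        le_apply_infDist hS hmono (Continuous.continuousWithinAt (by fun_prop))
          fun z hz => hreg.inner_le_dist_add_of_mem_proxSubdiff_infDist hx hς y hz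
    _ ≤ infDist y S + c * (R + R) ^ 2 := by
      gcongr
      exact add_nonneg infDist_nonneg (norm_nonneg _)
    _ = 2 * (r⁻¹).toReal * R ^ 2 + infDist y S := by rw [← hcoef]; ring

/-- Proposition 2.4(a): estimate for proximal subgradients of the distance
function of a prox-regular set. -/
theorem proxRegular_distance_subgradient_estimate
    (S : Set H) (hS : S.Nonempty) (hScl : IsClosed S)
    (r : ℝ≥0∞) (hr : 0 < r) (hreg : IsProxRegular r S)
    (x : H) (hx : x ∈ S) (ς : H)
    (hς : ∃ σ : ℝ, 0 ≤ σ ∧ ∃ δ : ℝ, 0 < δ ∧ ∀ y ∈ Metric.ball x δ,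
      ⟪ς, y - x⟫ ≤ Metric.infDist y S - Metric.infDist x S + σ * ‖y - x‖ ^ 2) :
    ∀ y : H, ENNReal.ofReal (Metric.infDist y S) < r →
      ⟪ς, y - x⟫ ≤ 2 * (r⁻¹).toReal * ‖y - x‖ ^ 2 + Metric.infDist y S :=
  proxRegular_distance_subgradient_estimate_general S hS r hreg x hx ς hς
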